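/- For every integer k ≥ 2, r_3(C_4, k) ≤ ⌊(k+1)²/2⌋ − 1; explicitly, r_3(C_4,k) ≤ ((k+1)² − 1)/2 − 1 when k is even and r_3(C_4,k) ≤ (k+1)²/2 − 1 when k is odd. -/

import Mathlib

/-- The complete multipartite graph with `p` parts, each of size `n`:
vertices are pairs `(part, index)`, adjacent iff they lie in different parts. -/
def completeMultipartite (p n : ℕ) : SimpleGraph (Fin p × Fin n) where
  Adj v w := v.1 ≠ w.1
  symm := ⟨fun _ _ h => h.symm⟩
  loopless := ⟨fun _ h => h rfl⟩

instance (p n : ℕ) : DecidableRel (completeMultipartite p n).Adj :=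
  fun v w => inferInstanceAs (Decidable (v.1 ≠ w.1))

/-- The edge coloring `c` contains a monochromatic cycle `C₄` in the graph `G`. -/
def HasMonoC4 {V : Type*} (G : SimpleGraph V) {k : ℕ} (c : Sym2 V → Fin k) : Prop :=
  ∃ v₁ v₂ v₃ v₄ : V,
    v₁ ≠ v₂ ∧ v₁ ≠ v₃ ∧ v₁ ≠ v₄ ∧ v₂ ≠ v₃ ∧ v₂ ≠ v₄ ∧ v₃ ≠ v₄ ∧
    G.Adj v₁ v₂ ∧ G.Adj v₂ v₃ ∧ G.Adj v₃ v₄ ∧ G.Adj v₄ v₁ ∧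
    c s(v₁, v₂) = c s(v₂, v₃) ∧ c s(v₂, v₃) = c s(v₃, v₄) ∧ c s(v₃, v₄) = c s(v₄, v₁)

/-- The `p`-partite Ramsey number `r_p(C₄, k)`: the least positive `n` such that every
`k`-coloring of the edges of `K_n^p` contains a monochromatic `C₄`. -/
noncomputable def multipartiteRamsey (p k : ℕ) : ℕ :=
  sInf {n : ℕ | 0 < n ∧
    ∀ c : Sym2 (Fin p × Fin n) → Fin k, HasMonoC4 (completeMultipartite p n) c}

/-!
Suppose a `k`-colouring of `K_n^3`, with `n + 1 = ⌊(k+1)²/2⌋`, has no monochromatic `C₄`. Then in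
each colour class two distinct vertices have at most one common neighbour, so for every part `A`
no ordered pair of distinct vertices of `A` lies in the neighbourhoods of two different vertices:
`∑ d (d - 1) ≤ n (n - 1)`, where `d` is the number of neighbours in `A`. The tangent-line bound `d (d - 1) ≥ 2 q d - q (q + 1)` (that is,
`(d - q) (d - q - 1) ≥ 0`), summed over the `6n` pairs (part, vertex outside it), shows that a
colour class with `E` edges satisfies `4 q E ≤ 3 n (n - 1) + 6 n q (q + 1)` for every `q`. Some
colour has `k E ≥ 3 n²` edges; this contradicts the bound for `q = (k + 1) / 2` when `k` is odd,
and for `q = k / 2` when `k` is even, where `n` is odd and hence `k E ≠ 3 n²`.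
-/

open Finset SimpleGraph

theorem Nat.two_mul_mul_le_mul_sub_one_add (d q : ℕ) :
    2 * q * d ≤ d * (d - 1) + q * (q + 1) := by
  rcases d with _ | d
  · positivity
  · rw [Nat.add_sub_cancel]
    nlinarith [sq_nonneg ((d : ℤ) - q)]

namespace SimpleGraph

variable {V : Type*}

theorem sum_card_filter_adj_mul_sub_one_le [Fintype V] (G : SimpleGraph V)
    [DecidableRel G.Adj] (hG : ∀ x y, x ≠ y → (G.commonNeighbors x y).Subsingleton)
    (s : Finset V) :
    ∑ v, #{w ∈ s | G.Adj v w} * (#{w ∈ s | G.Adj v w} - 1) ≤ #s * (#s - 1) := by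
  calc ∑ v, #{w ∈ s | G.Adj v w} * (#{w ∈ s | G.Adj v w} - 1)
      = ∑ v, #{x ∈ s.offDiag | G.Adj x.1 v ∧ G.Adj x.2 v} := by
        refine sum_congr rfl fun v _ => ?_
        rw [Nat.mul_sub_one, ← offDiag_card]
        congr 1
        ext
        simp only [mem_offDiag, mem_filter, G.adj_comm v]
        tauto
    _ = ∑ x ∈ s.offDiag, #{v | G.Adj x.1 v ∧ G.Adj x.2 v} := by
        simp only [card_filter]
        exact sum_comm
    _ ≤ ∑ _x ∈ s.offDiag, 1 := by
        refine sum_le_sum fun x hx => card_le_one.2 fun v hv w hw => ?_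
        simp only [mem_filter, mem_univ, true_and] at hv hw
        exact hG _ _ (mem_offDiag.1 hx).2.2 (G.mem_commonNeighbors.2 hv)
          (G.mem_commonNeighbors.2 hw)
    _ = #s * (#s - 1) := by simp [Nat.mul_sub_one]

def colorClass (G : SimpleGraph V) {k : ℕ} (c : Sym2 V → Fin k) (i : Fin k) : SimpleGraph V where
  Adj v w := G.Adj v w ∧ c s(v, w) = i
  symm := ⟨fun _ w h => ⟨h.1.symm, Sym2.eq_swap (a := w) ▸ h.2⟩⟩
  loopless := ⟨fun v h => G.loopless.irrefl v h.1⟩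

instance (G : SimpleGraph V) [DecidableRel G.Adj] {k : ℕ} (c : Sym2 V → Fin k) (i : Fin k) :
    DecidableRel (G.colorClass c i).Adj :=
  fun v w => inferInstanceAs (Decidable (G.Adj v w ∧ c s(v, w) = i))

@[simp]
theorem colorClass_adj (G : SimpleGraph V) {k : ℕ} (c : Sym2 V → Fin k) (i : Fin k) {v w : V} :
    (G.colorClass c i).Adj v w ↔ G.Adj v w ∧ c s(v, w) = i :=
  Iff.rfl

theorem colorClass_le (G : SimpleGraph V) {k : ℕ} (c : Sym2 V → Fin k) (i : Fin k) :
    G.colorClass c i ≤ G :=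
  fun _ _ h => h.1

theorem subsingleton_commonNeighbors_colorClass {G : SimpleGraph V} {k : ℕ}
    {c : Sym2 V → Fin k} (hc : ¬ HasMonoC4 G c) (i : Fin k) {x y : V} (hxy : x ≠ y) :
    ((G.colorClass c i).commonNeighbors x y).Subsingleton := by
  intro v hv w hw
  simp only [mem_commonNeighbors, colorClass_adj] at hv hw
  obtain ⟨⟨hxv, cxv⟩, hyv, cyv⟩ := hv
  obtain ⟨⟨hxw, cxw⟩, hyw, cyw⟩ := hw
  by_contra hvw
  exact hc ⟨x, v, y, w, hxv.ne, hxy, hxw.ne, hyv.ne.symm, hvw, hyw.ne,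
    hxv, hyv.symm, hyw, hxw.symm,
    by rw [cxv, Sym2.eq_swap, cyv], by rw [Sym2.eq_swap, cyv, cyw], by rw [cyw, Sym2.eq_swap, cxw]⟩

variable [Fintype V] (G : SimpleGraph V) [DecidableRel G.Adj]

theorem sum_degree_colorClass {k : ℕ} (c : Sym2 V → Fin k) (v : V) :
    ∑ i, (G.colorClass c i).degree v = G.degree v := by
  rw [← card_neighborFinset_eq_degree,
    card_eq_sum_card_fiberwise (f := fun w => c s(v, w)) (t := univ) fun _ _ => mem_univ _]
  refine sum_congr rfl fun i _ => ?_
  rw [← card_neighborFinset_eq_degree]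
  congr 1
  ext w
  simp

theorem sum_card_edgeFinset_colorClass {k : ℕ} (c : Sym2 V → Fin k) :
    ∑ i, #(G.colorClass c i).edgeFinset = #G.edgeFinset := by
  have h : 2 * ∑ i, #(G.colorClass c i).edgeFinset = 2 * #G.edgeFinset := by
    simp only [mul_sum, ← sum_degrees_eq_twice_card_edges]
    rw [sum_comm]
    simp only [sum_degree_colorClass]
  omega

end SimpleGraph

namespace completeMultipartite

variable {p n : ℕ}

theorem card_filter_fst_eq (A : Fin p) : #{w : Fin p × Fin n | w.1 = A} = n := by
  rw [show ({w : Fin p × Fin n | w.1 = A} : Finset _) = {A} ×ˢ univ by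
    ext ⟨a, b⟩; simp [eq_comm], card_product]
  simp

theorem degree_eq_sum_erase {H : SimpleGraph (Fin p × Fin n)} [DecidableRel H.Adj]
    (hH : H ≤ completeMultipartite p n) (v : Fin p × Fin n) :
    H.degree v = ∑ A ∈ univ.erase v.1, #{w ∈ {w | w.1 = A} | H.Adj v w} := by
  have hsame : #{w ∈ H.neighborFinset v | w.1 = v.1} = 0 := by
    simpa using fun _ _ h => Ne.symm (hH h)
  rw [← card_neighborFinset_eq_degree,
    card_eq_sum_card_fiberwise (f := Prod.fst) (t := univ) fun _ _ => mem_univ _,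
    ← add_sum_erase _ _ (mem_univ v.1), hsame, zero_add]
  refine sum_congr rfl fun A _ => ?_
  congr 1
  ext w
  simp [and_comm]

theorem degree_eq (v : Fin p × Fin n) : (completeMultipartite p n).degree v = (p - 1) * n := by
  rw [degree_eq_sum_erase le_rfl, sum_congr rfl fun A hA => ?_, sum_const,
    card_erase_of_mem (mem_univ _), card_univ, Fintype.card_fin, smul_eq_mul]
  rw [filter_true_of_mem fun w hw => ?_, card_filter_fst_eq]
  show v.1 ≠ w.1
  rw [(mem_filter.1 hw).2]
  exact (ne_of_mem_erase hA).symm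

theorem two_mul_card_edgeFinset :
    2 * #(completeMultipartite p n).edgeFinset = p * n * ((p - 1) * n) := by
  simp [← sum_degrees_eq_twice_card_edges, degree_eq]

theorem two_mul_mul_sum_degree_le {H : SimpleGraph (Fin p × Fin n)} [DecidableRel H.Adj]
    (hH : H ≤ completeMultipartite p n)
    (hC4 : ∀ x y, x ≠ y → (H.commonNeighbors x y).Subsingleton) (q : ℕ) :
    2 * q * ∑ v, H.degree v ≤ p * (n * (n - 1)) + p * n * ((p - 1) * (q * (q + 1))) := by
  set d : Fin p × Fin n → Fin p → ℕ := fun v A => #{w ∈ {w | w.1 = A} | H.Adj v w}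
  calc 2 * q * ∑ v, H.degree v = ∑ v, ∑ A ∈ univ.erase v.1, 2 * q * d v A := by
        simp only [degree_eq_sum_erase hH, mul_sum, d]
    _ ≤ ∑ v, ∑ A ∈ univ.erase v.1, (d v A * (d v A - 1) + q * (q + 1)) :=
        sum_le_sum fun v _ => sum_le_sum fun A _ => Nat.two_mul_mul_le_mul_sub_one_add _ _
    _ ≤ ∑ v, (∑ A, d v A * (d v A - 1) + (p - 1) * (q * (q + 1))) := by
        refine sum_le_sum fun v _ => ?_
        rw [sum_add_distrib, sum_const, card_erase_of_mem (mem_univ _), card_univ,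
          Fintype.card_fin, smul_eq_mul]
        gcongr
        exact erase_subset _ _
    _ = ∑ A, ∑ v, d v A * (d v A - 1) + p * n * ((p - 1) * (q * (q + 1))) := by
        rw [sum_add_distrib, sum_comm, sum_const, card_univ]
        simp
    _ ≤ ∑ _A : Fin p, n * (n - 1) + p * n * ((p - 1) * (q * (q + 1))) := by
        gcongr with A
        simpa only [card_filter_fst_eq] using H.sum_card_filter_adj_mul_sub_one_le hC4 {w | w.1 = A}
    _ = p * (n * (n - 1)) + p * n * ((p - 1) * (q * (q + 1))) := by simp

end completeMultipartite

-- `3 n (n - 1) + 6 n q (q + 1)` is the bound of `two_mul_mul_sum_degree_le` for `p = 3`.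

theorem edge_bound_lt_of_odd {m n E : ℕ} (hm : 1 ≤ m) (hn : n + 1 = (2 * m + 1 + 1) ^ 2 / 2)
    (hE : 3 * n ^ 2 ≤ (2 * m + 1) * E) :
    3 * (n * (n - 1)) + 6 * n * ((m + 1) * (m + 2)) < 4 * (m + 1) * E := by
  rw [show (2 * m + 1 + 1) ^ 2 = 2 * (2 * (m + 1) ^ 2) by ring,
    Nat.mul_div_cancel_left _ two_pos] at hn
  obtain rfl : n = 2 * m ^ 2 + 4 * m + 1 := by nlinarith
  rw [show 2 * m ^ 2 + 4 * m + 1 - 1 = 2 * m ^ 2 + 4 * m by omega]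
  nlinarith

theorem edge_bound_lt_of_even {m n E : ℕ} (hn : n + 1 = (2 * m + 1) ^ 2 / 2)
    (hE : 3 * n ^ 2 ≤ 2 * m * E) :
    3 * (n * (n - 1)) + 6 * n * (m * (m + 1)) < 4 * m * E := by
  rw [show (2 * m + 1) ^ 2 = 1 + 2 * (2 * (m * (m + 1))) by ring,
    Nat.add_mul_div_left _ _ two_pos, Nat.div_eq_of_lt one_lt_two, zero_add] at hn
  have hsq : 3 * (n * (n - 1)) + 6 * n * (m * (m + 1)) = 6 * n ^ 2 := by
    rcases n with _ | n
    · simp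
    · have h2 : 6 * (n + 1) * (m * (m + 1)) = 3 * (n + 1) * (n + 1 + 1) := by rw [hn]; ring
      rw [Nat.add_sub_cancel, h2]
      ring
  have hodd : Odd (3 * n ^ 2) := (by decide : Odd 3).mul (Nat.odd_iff.2 (by omega)).pow
  rw [hsq]
  exact lt_of_le_of_ne (by linarith) fun h => Nat.not_even_iff_odd.2 hodd ⟨m * E, by linarith⟩

theorem completeMultipartite.hasMonoC4_of_add_one_eq {k n : ℕ} (hk : 2 ≤ k)
    (hn : n + 1 = (k + 1) ^ 2 / 2) (c : Sym2 (Fin 3 × Fin n) → Fin k) :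
    HasMonoC4 (completeMultipartite 3 n) c := by
  by_contra hc
  set E : Fin k → ℕ := fun i => #((completeMultipartite 3 n).colorClass c i).edgeFinset
  have hbound (i : Fin k) (q : ℕ) :
      4 * q * E i ≤ 3 * (n * (n - 1)) + 6 * n * (q * (q + 1)) := by
    have := two_mul_mul_sum_degree_le (colorClass_le _ c i)
      (fun _ _ hxy => subsingleton_commonNeighbors_colorClass hc i hxy) q
    rw [sum_degrees_eq_twice_card_edges] at this
    convert this using 1 <;> ring
  have hsum : ∑ i, E i = 3 * n ^ 2 := by
    have := two_mul_card_edgeFinset (p := 3) (n := n)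
    rw [← sum_card_edgeFinset_colorClass _ c] at this
    linarith
  obtain ⟨i, -, hi⟩ : ∃ i ∈ univ, 3 * n ^ 2 ≤ k * E i :=
    exists_le_of_sum_le ⟨⟨0, by omega⟩, mem_univ _⟩ (by simp [← mul_sum, hsum, mul_comm])
  rcases Nat.even_or_odd' k with ⟨m, rfl | rfl⟩
  · exact (hbound i m).not_gt (edge_bound_lt_of_even hn hi)
  · exact (hbound i (m + 1)).not_gt (edge_bound_lt_of_odd (by omega) hn hi)

/-- For every `k ≥ 2`, `r₃(C₄, k) ≤ ⌊(k+1)²/2⌋ - 1`; explicitly,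
`r₃(C₄,k) ≤ ((k+1)² - 1)/2 - 1` for even `k` and `r₃(C₄,k) ≤ (k+1)²/2 - 1` for odd `k`. -/
theorem tripartiteRamsey_upper_bound (k : ℕ) (hk : 2 ≤ k) :
    multipartiteRamsey 3 k ≤ (k + 1) ^ 2 / 2 - 1 ∧
    (Even k → multipartiteRamsey 3 k ≤ ((k + 1) ^ 2 - 1) / 2 - 1) ∧
    (Odd k → multipartiteRamsey 3 k ≤ (k + 1) ^ 2 / 2 - 1) := by
  have h9 : 9 ≤ (k + 1) ^ 2 := by nlinarith
  have hbound : multipartiteRamsey 3 k ≤ (k + 1) ^ 2 / 2 - 1 :=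
    Nat.sInf_le ⟨by omega, completeMultipartite.hasMonoC4_of_add_one_eq hk (by omega)⟩
  refine ⟨hbound, fun ⟨m, hm⟩ => ?_, fun _ => hbound⟩
  rw [show (k + 1) ^ 2 = 2 * (2 * m * (m + 1)) + 1 by subst hm; ring] at hbound ⊢
  omega
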